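/- arXiv:2309.05903 — 6 statements merged into one kernel-verified Lean document; each statement's English description precedes it below -/
import Mathlib

section
/- Fix an integer k ≥ 1 and define the polynomial W(n,k)(x) = Σ_{m=0}^{k} w(n,k,m) x^m, where w(n,k,m) = (1/k)*C(n,k-1)*C(n-k-1,m-1)*C(k,m) for 0 < m ≤ k and k+m ≤ n, w(n,k,0) = 1 if n = k, and w(n,k,m) = 0 otherwise. Then for all n ≥ k - 1, (n-k+2)^2 (n-k+3) * W(n+2,k)(x) = (n+2)(n-k+2) * (2(n-k+1) - (n-2k+1)x) * W(n+1,k)(x) + (n+1)(n+2)(n-k)(x-1) * W(n,k)(x). -/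
/-!
The coefficients `w n k m` satisfy two first-order contiguous relations, one in `n` and one in
`m`, and thanks to the zeros of their polynomial factors these hold for all integer indices,
boundary cases included. Comparing coefficients of `x^m`, the three-term recurrence follows from
them once multiplied by `n - k - m + 2` or by `m (m - 1)`. For `n ≥ k - 1` both multipliers vanish
only at `m = 1`, `n = k - 1`, where the recurrence reduces to `w (k + 1) k 1 = C(k + 1, 2)`.
-/

noncomputable def w (n k m : ℤ) : ℚ :=
  if 0 < m ∧ m ≤ k ∧ k + m ≤ n then
    (1 / (k : ℚ)) * (n.toNat.choose (k - 1).toNat : ℚ) *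
      ((n - k - 1).toNat.choose (m - 1).toNat : ℚ) * (k.toNat.choose m.toNat : ℚ)
  else if m = 0 ∧ n = k then 1 else 0

open Polynomial

noncomputable def W (n k : ℤ) : Polynomial ℚ :=
  ∑ m ∈ Finset.range (k.toNat + 1), Polynomial.C (w n k m) * X ^ m

theorem cast_choose_toNat_succ_left {N r : ℤ} (hN : 0 ≤ N) (hr : 0 ≤ r) :
    ((N : ℚ) + 1 - r) * ((N + 1).toNat.choose r.toNat : ℚ) =
      ((N : ℚ) + 1) * (N.toNat.choose r.toNat : ℚ) := by
  lift N to ℕ using hN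
  lift r to ℕ using hr
  simp only [Int.toNat_natCast, Int.cast_natCast, show ((N : ℤ) + 1).toNat = N + 1 by omega]
  rcases le_or_gt r (N + 1) with h | h
  · have := Nat.choose_mul_succ_eq N r
    rw [← Nat.cast_inj (R := ℚ)] at this
    push_cast [h] at this
    linear_combination -this
  · rw [Nat.choose_eq_zero_of_lt h, Nat.choose_eq_zero_of_lt (by omega)]
    simp

theorem cast_choose_toNat_succ_right {N r : ℤ} (hN : 0 ≤ N) (hr : 0 ≤ r) :
    ((r : ℚ) + 1) * (N.toNat.choose (r + 1).toNat : ℚ) =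
      ((N : ℚ) - r) * (N.toNat.choose r.toNat : ℚ) := by
  lift N to ℕ using hN
  lift r to ℕ using hr
  simp only [Int.toNat_natCast, Int.cast_natCast, show ((r : ℤ) + 1).toNat = r + 1 by omega]
  rcases le_or_gt r N with h | h
  · have := Nat.choose_succ_right_eq N r
    rw [← Nat.cast_inj (R := ℚ)] at this
    push_cast [h] at this
    linear_combination this
  · rw [Nat.choose_eq_zero_of_lt (by omega), Nat.choose_eq_zero_of_lt h]
    simp

section

variable {n k m : ℤ}

theorem w_of_pos (h₀ : 0 < m) (hmk : m ≤ k) (hn : k + m ≤ n) :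
    w n k m = (1 / (k : ℚ)) * (n.toNat.choose (k - 1).toNat : ℚ) *
      ((n - k - 1).toNat.choose (m - 1).toNat : ℚ) * (k.toNat.choose m.toNat : ℚ) :=
  if_pos ⟨h₀, hmk, hn⟩

theorem w_zero_right : w n k 0 = if n = k then 1 else 0 := by
  simp [w]

theorem w_eq_zero_of_neg (hm : m < 0) : w n k m = 0 := by
  rw [w, if_neg (by omega), if_neg (by omega)]

theorem w_eq_zero_of_lt_right (h₀ : 0 < m) (hm : k < m) : w n k m = 0 := by
  rw [w, if_neg (by omega), if_neg (by omega)]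

theorem w_eq_zero_of_lt (hn : n < k + m) : w n k m = 0 := by
  rw [w, if_neg (by omega), if_neg (by omega)]

end

theorem w_succ_left (n k m : ℤ) :
    ((n : ℚ) - k + 2) * ((n : ℚ) - k - m + 1) * w (n + 1) k m =
      ((n : ℚ) + 1) * ((n : ℚ) - k) * w n k m := by
  rcases lt_trichotomy (n + 1) (k + m) with h | h | h
  · rw [w_eq_zero_of_lt h, w_eq_zero_of_lt (by omega)]; ring
  · rw [w_eq_zero_of_lt (n := n) (by omega),
      show (n : ℚ) = k + m - 1 by exact_mod_cast (by omega : n = k + m - 1)]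
    ring
  rcases lt_trichotomy m 0 with hm | rfl | hm
  · rw [w_eq_zero_of_neg hm, w_eq_zero_of_neg hm]; ring
  · rw [w_zero_right, w_zero_right, if_neg (by omega)]
    split_ifs with hnk
    · subst hnk; ring
    · ring
  rcases le_or_gt m k with hmk | hmk
  swap
  · rw [w_eq_zero_of_lt_right hm hmk, w_eq_zero_of_lt_right hm hmk]; ring
  rw [w_of_pos hm hmk (by omega), w_of_pos hm hmk (by omega),
    show n + 1 - k - 1 = n - k - 1 + 1 by ring]
  have h₁ := cast_choose_toNat_succ_left (N := n) (r := k - 1) (by omega) (by omega)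
  have h₂ := cast_choose_toNat_succ_left (N := n - k - 1) (r := m - 1) (by omega) (by omega)
  push_cast at h₁ h₂
  linear_combination (k.toNat.choose m.toNat : ℚ) / k *
    (((n : ℚ) - k - m + 1) * ((n - k - 1 + 1).toNat.choose (m - 1).toNat : ℚ) * h₁ +
      ((n : ℚ) + 1) * (n.toNat.choose (k - 1).toNat : ℚ) * h₂)

theorem w_sub_one_right (n k m : ℤ) :
    (m : ℚ) * ((m : ℚ) - 1) * w n k m =
      ((n : ℚ) - k - m + 1) * ((k : ℚ) - m + 1) * w n k (m - 1) := by
  rcases show m < 0 ∨ m = 0 ∨ m = 1 ∨ (1 < m ∧ m ≤ k) ∨ (1 < m ∧ m = k + 1) ∨ (1 < m ∧ k + 1 < m)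
    by omega with hm | rfl | rfl | ⟨hm, hmk⟩ | ⟨hm, rfl⟩ | ⟨hm, hmk⟩
  · rw [w_eq_zero_of_neg hm, w_eq_zero_of_neg (by omega)]; ring
  · rw [w_eq_zero_of_neg (m := 0 - 1) (by omega)]; ring
  · rw [sub_self, w_zero_right]
    split_ifs with hnk
    · subst hnk; ring
    · ring
  rotate_left
  · rw [w_eq_zero_of_lt_right (by omega) (by omega)]; push_cast; ring
  · rw [w_eq_zero_of_lt_right (k := k) (by omega) (by omega),
      w_eq_zero_of_lt_right (k := k) (by omega) (by omega)]
    ring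
  rcases lt_trichotomy n (k + m - 1) with h | h | h
  · rw [w_eq_zero_of_lt (by omega), w_eq_zero_of_lt (by omega)]; ring
  · rw [w_eq_zero_of_lt (by omega), show (n : ℚ) = k + m - 1 by exact_mod_cast h]; ring
  rw [w_of_pos (by omega) hmk (by omega), w_of_pos (by omega) (by omega) (by omega),
    show m - 1 - 1 = m - 2 by ring]
  have h₁ := cast_choose_toNat_succ_right (N := n - k - 1) (r := m - 2) (by omega) (by omega)
  have h₂ := cast_choose_toNat_succ_right (N := k) (r := m - 1) (by omega) (by omega)
  rw [show m - 2 + 1 = m - 1 by ring] at h₁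
  rw [sub_add_cancel] at h₂
  push_cast at h₁ h₂
  linear_combination (n.toNat.choose (k - 1).toNat : ℚ) / k *
    ((m : ℚ) * (k.toNat.choose m.toNat : ℚ) * h₁ +
      ((n : ℚ) - k - m + 1) * ((n - k - 1).toNat.choose (m - 2).toNat : ℚ) * h₂)

theorem w_add_one_self_one {k : ℤ} (hk : 0 ≤ k) : w (k + 1) k 1 = (k + 1) * k / 2 := by
  obtain rfl | hk := hk.eq_or_lt
  · rw [w_eq_zero_of_lt_right (by norm_num) (by norm_num)]; simp
  obtain ⟨K, rfl⟩ : ∃ K : ℕ, k = K + 1 := ⟨(k - 1).toNat, by omega⟩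
  rw [w_of_pos (by norm_num) (by omega) le_rfl]
  simp only [show ((K : ℤ) + 1 + 1).toNat = K + 2 by omega, show ((K : ℤ) + 1 - 1).toNat = K by omega,
    show ((K : ℤ) + 1).toNat = K + 1 by omega, sub_self, Int.toNat_zero, Int.toNat_one,
    show (K : ℤ) + 1 + 1 - (K + 1) - 1 = 0 by ring, Nat.choose_zero_right, Nat.choose_one_right]
  rw [Nat.choose_symm_add, Nat.cast_choose_two]
  push_cast
  field_simp
  ring

theorem w_recurrence {n k : ℤ} (hk : 0 ≤ k) (hn : k - 1 ≤ n) (m : ℤ) :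
    ((n : ℚ) - k + 2) ^ 2 * ((n : ℚ) - k + 3) * w (n + 2) k m =
      ((n : ℚ) + 2) * ((n : ℚ) - k + 2) *
        (2 * ((n : ℚ) - k + 1) * w (n + 1) k m - ((n : ℚ) - 2 * k + 1) * w (n + 1) k (m - 1))
      + ((n : ℚ) + 1) * ((n : ℚ) + 2) * ((n : ℚ) - k) * (w n k (m - 1) - w n k m) := by
  have step₁ := w_succ_left n k m
  have step₂ := w_succ_left (n + 1) k m
  have step₁' := w_succ_left n k (m - 1)
  have step₂' := w_succ_left (n + 1) k (m - 1)
  have drop₁ := w_sub_one_right (n + 1) k m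
  have drop₂ := w_sub_one_right (n + 2) k m
  rw [add_assoc, one_add_one_eq_two] at step₂ step₂'
  push_cast at *
  by_cases hline : (n : ℚ) - k - m + 2 = 0
  · by_cases hm : (m : ℚ) * (m - 1) = 0
    · have hnm : n = k + m - 2 := by exact_mod_cast (by linarith : (n : ℚ) = k + m - 2)
      have hm01 : m = 0 ∨ m = 1 := by
        rcases mul_eq_zero.1 hm with h | h
        · exact .inl (by exact_mod_cast h)
        · exact .inr (by exact_mod_cast sub_eq_zero.1 h)
      obtain rfl : m = 1 := by omega
      obtain rfl : n = k - 1 := by omega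
      rw [show k - 1 + 2 = k + 1 by ring, show k - 1 + 1 = k by ring, show (1 : ℤ) - 1 = 0 by norm_num,
        w_add_one_self_one hk, w_zero_right, if_pos rfl, w_eq_zero_of_lt (n := k) (by omega),
        w_eq_zero_of_lt (n := k - 1) (m := 0) (by omega),
        w_eq_zero_of_lt (n := k - 1) (m := 1) (by omega)]
      push_cast
      ring
    · refine mul_left_cancel₀ hm ?_
      linear_combination ((n : ℚ) - k + 2) ^ 2 * ((n : ℚ) - k + 3) * drop₂
        + ((n : ℚ) - k + 2) ^ 2 * ((k : ℚ) - m + 1) * step₂'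
        + (m : ℚ) * (m - 1) * (n + 2) * step₁' - (m : ℚ) * (m - 1) * (n + 2) * step₁
        - ((n : ℚ) + 2) * ((n : ℚ) - k + 2) * ((n : ℚ) - k + m + 1) * drop₁
  · refine mul_left_cancel₀ hline ?_
    linear_combination ((n : ℚ) - k + 2) ^ 2 * step₂ + ((n : ℚ) + 2) * ((n : ℚ) - k - m + 2) * step₁'
      - ((n : ℚ) + 2) * ((n : ℚ) - k - m + 2) * step₁ + ((n : ℚ) + 2) * ((n : ℚ) - k + 2) * drop₁

theorem coeff_W (n k : ℤ) (j : ℕ) : (W n k).coeff j = w n k j := by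
  simp only [W, finsetSum_coeff, coeff_C_mul, coeff_X_pow, mul_ite, mul_one, mul_zero,
    Finset.sum_ite_eq, Finset.mem_range]
  split_ifs with hj
  · rfl
  · exact (w_eq_zero_of_lt_right (by omega) (by omega)).symm

theorem coeff_X_mul_W (n k : ℤ) (j : ℕ) : (X * W n k).coeff j = w n k (j - 1) := by
  cases j with
  | zero => rw [coeff_X_mul_zero, w_eq_zero_of_neg (by norm_num)]
  | succ j => rw [coeff_X_mul, coeff_W]; push_cast; ring_nf

/-- Recurrence for the polynomials W(n,k)(x) with k fixed, in cleared-denominator form. -/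
theorem stmt3 (n k : ℤ) (hk : 1 ≤ k) (hn : k - 1 ≤ n) :
    Polynomial.C (((n - k + 2) ^ 2 * (n - k + 3) : ℚ)) * W (n + 2) k =
      Polynomial.C (((n + 2) * (n - k + 2) : ℚ)) *
        (Polynomial.C ((2 * (n - k + 1) : ℚ)) - Polynomial.C ((n - 2 * k + 1 : ℚ)) * X) *
        W (n + 1) k
      + Polynomial.C (((n + 1) * (n + 2) * (n - k) : ℚ)) * (X - 1) * W n k := by
  ext j
  simp only [sub_mul, mul_assoc, one_mul, coeff_add, coeff_sub, coeff_C_mul, coeff_W, coeff_X_mul_W]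
  linear_combination w_recurrence (by omega) hn j
end

section
/- Fix an integer n ≥ 1 and let k satisfy 1 ≤ k ≤ ⌊(n+1)/2⌋ - 2. Let W(n,k)(x) = Σ_{m=0}^{k} w(n,k,m) x^m with w(n,k,m) given by the explicit formula w(n,k,m) = (1/k)*C(n,k-1)*C(n-k-1,m-1)*C(k,m) (for 0 < m ≤ k, k+m ≤ n; equal to 1 if m=0 and n=k; 0 otherwise). Then W(n,k+2)(x) = (a(n,k)x + b(n,k)) * W(n,k+1)(x) - c(n,k) * W(n,k)(x), where a(n,k) = ((n-k)(n-2k-2)(n-2k-3))/((k+1)(k+2)(n-k-2)), b(n,k) = (2(n-k)(n-k-1)(n-2k-2))/((k+2)(n-k-2)(n-2k-1)), c(n,k) = ((n-k+1)(n-k)^2 (n-2k-3))/((k+1)(k+2)(n-k-2)(n-2k-1)). -/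
open Polynomial

section choose

variable {K : Type*} [Field K] [CharZero K]

theorem cast_choose_succ_right_eq (n k : ℕ) :
    (n.choose (k + 1) : K) = (n - k) / (k + 1) * n.choose k := by
  rcases le_or_gt k n with h | h
  · rw [div_mul_eq_mul_div, eq_div_iff k.cast_add_one_ne_zero, ← Nat.cast_sub h]
    exact_mod_cast (Nat.choose_succ_right_eq n k).trans (mul_comm _ _)
  · simp [Nat.choose_eq_zero_of_lt h, Nat.choose_eq_zero_of_lt (h.trans k.lt_succ_self)]

theorem cast_choose_eq_div_mul_choose_succ_succ (n k : ℕ) :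
    (n.choose k : K) = (k + 1) / (n + 1) * (n + 1).choose (k + 1) := by
  rw [div_mul_eq_mul_div, eq_div_iff n.cast_add_one_ne_zero, mul_comm]
  exact_mod_cast (Nat.add_one_mul_choose_eq n k).trans (mul_comm _ _)

theorem cast_choose_eq_div_mul_choose_succ_left (n k : ℕ) :
    (n.choose k : K) = (n + 1 - k) / (n + 1) * (n + 1).choose k := by
  rcases le_or_gt k (n + 1) with h | h
  · rw [div_mul_eq_mul_div, eq_div_iff n.cast_add_one_ne_zero]
    have : ((n + 1 - k : ℕ) : K) = n + 1 - k := by push_cast [Nat.cast_sub h]; ring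
    rw [← this]
    exact_mod_cast (Nat.choose_mul_succ_eq n k).trans (mul_comm _ _)
  · simp [Nat.choose_eq_zero_of_lt h, Nat.choose_eq_zero_of_lt (n.lt_succ_self.trans h)]

end choose

def recA (n k : ℚ) : ℚ :=
  (n - k) * (n - 2 * k - 2) * (n - 2 * k - 3) / ((k + 1) * (k + 2) * (n - k - 2))

def recB (n k : ℚ) : ℚ :=
  2 * (n - k) * (n - k - 1) * (n - 2 * k - 2) / ((k + 2) * (n - k - 2) * (n - 2 * k - 1))

def recC (n k : ℚ) : ℚ :=
  (n - k + 1) * (n - k) ^ 2 * (n - 2 * k - 3) /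
    ((k + 1) * (k + 2) * (n - k - 2) * (n - 2 * k - 1))

theorem recA_eq (j q : ℚ) :
    recA (j + 4 + q) (j + 1) =
      (q + 3) * (q - j) * (q - j - 1) / ((j + 2) * (j + 3) * (q + 1)) := by
  rw [recA]; congr 1 <;> ring

theorem recB_eq (j q : ℚ) :
    recB (j + 4 + q) (j + 1) =
      2 * (q + 3) * (q + 2) * (q - j) / ((j + 3) * (q + 1) * (q - j + 1)) := by
  rw [recB]; congr 1 <;> ring

theorem recC_eq (j q : ℚ) :
    recC (j + 4 + q) (j + 1) =
      (q + 4) * (q + 3) ^ 2 * (q - j - 1) / ((j + 2) * (j + 3) * (q + 1) * (q - j + 1)) := by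
  rw [recC]; congr 1 <;> ring

theorem choose_recurrence_coeff_one (j q : ℕ) (hjq : j ≤ q) :
    ((j + 4 + q).choose (j + 2) : ℚ) =
      recB (j + 4 + q) (j + 1) * (j + 4 + q).choose (j + 1) -
        recC (j + 4 + q) (j + 1) * (j + 4 + q).choose j := by
  rw [cast_choose_succ_right_eq (j + 4 + q) (j + 1), cast_choose_succ_right_eq (j + 4 + q) j]
  push_cast
  rw [recB_eq, recC_eq]
  have hqj : (q : ℚ) - j + 1 ≠ 0 := by linarith [(Nat.cast_le (α := ℚ)).2 hjq]
  field_simp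
  ring

theorem choose_recurrence_coeff_succ_succ (j q m : ℕ) (hjq : j ≤ q) :
    ((j + 4 + q).choose (j + 2) : ℚ) / (j + 3) * q.choose (m + 1) * (j + 3).choose (m + 2) =
      recA (j + 4 + q) (j + 1) *
          (((j + 4 + q).choose (j + 1) : ℚ) / (j + 2) * (q + 1).choose m * (j + 2).choose (m + 1)) +
        recB (j + 4 + q) (j + 1) *
          (((j + 4 + q).choose (j + 1) : ℚ) / (j + 2) * (q + 1).choose (m + 1) *
            (j + 2).choose (m + 2)) -
        recC (j + 4 + q) (j + 1) *
          (((j + 4 + q).choose j : ℚ) / (j + 1) * (q + 2).choose (m + 1) *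
            (j + 1).choose (m + 2)) := by
  rw [cast_choose_succ_right_eq (j + 4 + q) (j + 1), cast_choose_succ_right_eq (j + 4 + q) j,
    cast_choose_eq_div_mul_choose_succ_left q, cast_choose_eq_div_mul_choose_succ_left (q + 1),
    cast_choose_eq_div_mul_choose_succ_succ (q + 1) m,
    cast_choose_eq_div_mul_choose_succ_left (j + 1),
    cast_choose_eq_div_mul_choose_succ_left (j + 2) (m + 2),
    cast_choose_eq_div_mul_choose_succ_succ (j + 2) (m + 1)]
  push_cast
  rw [recA_eq, recB_eq, recC_eq]
  have hqj : (q : ℚ) - j + 1 ≠ 0 := by linarith [(Nat.cast_le (α := ℚ)).2 hjq]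
  field_simp
  ring

theorem coeff_C_mul_X_add_C_mul_succ {R : Type*} [Semiring R] (a b : R) (p : R[X]) (m : ℕ) :
    ((C a * X + C b) * p).coeff (m + 1) = a * p.coeff m + b * p.coeff (m + 1) := by
  rw [add_mul, mul_assoc, coeff_add, coeff_C_mul, coeff_C_mul, coeff_X_mul]

theorem coeff_W_s5 (n k : ℤ) (m : ℕ) :
    (W n k).coeff m = if m ≤ k.toNat then w n k m else 0 := by
  simp only [W, finsetSum_coeff, coeff_C_mul, coeff_X_pow, mul_ite, mul_one, mul_zero,
    Finset.sum_ite_eq, Finset.mem_range, Nat.lt_succ_iff]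

theorem coeff_W_zero {n k : ℤ} (h : n ≠ k) : (W n k).coeff 0 = 0 := by
  simp [coeff_W_s5, w, h]

theorem coeff_W_succ {n k : ℤ} {N j p : ℕ} (hk : k = j + 1) (hN : j + 2 + p = N) (hn : n = N)
    (m : ℕ) :
    (W n k).coeff (m + 1) = (N.choose j : ℚ) / (j + 1) * p.choose m * (j + 1).choose (m + 1) := by
  subst hk hN hn
  rw [coeff_W_s5, w]
  by_cases hmj : m ≤ j
  · by_cases hmN : m ≤ p
    · rw [if_pos (by omega), if_pos (by omega)]
      have e1 : ((j : ℤ) + 1 - 1).toNat = j := by omega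
      have e2 : (((j + 2 + p : ℕ) : ℤ) - (j + 1) - 1).toNat = p := by omega
      have e3 : (((m + 1 : ℕ) : ℤ) - 1).toNat = m := by omega
      have e4 : ((j : ℤ) + 1).toNat = j + 1 := by omega
      have e5 : ((j + 2 + p : ℕ) : ℤ).toNat = j + 2 + p := Int.toNat_natCast _
      rw [e1, e2, e3, e4, e5, Int.toNat_natCast]
      push_cast
      ring
    · rw [Nat.choose_eq_zero_of_lt (by omega : p < m), if_pos (by omega), if_neg (by omega),
        if_neg (by omega)]
      simp
  · rw [if_neg (by omega), Nat.choose_eq_zero_of_lt (by omega : j + 1 < m + 1)]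
    simp

theorem stmt5_general (n k : ℤ) (hk : 1 ≤ k) (hk2 : k ≤ (n + 1) / 2 - 2) :
    W n (k + 2) =
      (Polynomial.C (((n - k) * (n - 2 * k - 2) * (n - 2 * k - 3) : ℚ) /
          ((k + 1) * (k + 2) * (n - k - 2))) * X +
        Polynomial.C ((2 * (n - k) * (n - k - 1) * (n - 2 * k - 2) : ℚ) /
          ((k + 2) * (n - k - 2) * (n - 2 * k - 1)))) * W n (k + 1)
      - Polynomial.C (((n - k + 1) * (n - k) ^ 2 * (n - 2 * k - 3) : ℚ) /
          ((k + 1) * (k + 2) * (n - k - 2) * (n - 2 * k - 1))) * W n k := by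
  obtain ⟨j, hj⟩ : ∃ j : ℕ, k = j + 1 := ⟨(k - 1).toNat, by omega⟩
  obtain ⟨q, hq⟩ : ∃ q : ℕ, n = ↑(j + 4 + q) := ⟨(n - j - 4).toNat, by omega⟩
  have hjq : j ≤ q := by omega
  have hW2 := coeff_W_succ (show k + 2 = ↑(j + 2) + 1 by omega)
    (show j + 2 + 2 + q = j + 4 + q by ring) hq
  have hW1 := coeff_W_succ (show k + 1 = ↑(j + 1) + 1 by omega)
    (show j + 1 + 2 + (q + 1) = j + 4 + q by ring) hq
  have hW0 := coeff_W_succ hj (show j + 2 + (q + 2) = j + 4 + q by ring) hq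
  change W _ _ = (C (recA n k) * X + C (recB n k)) * W _ _ - C (recC n k) * W _ _
  rw [show (n : ℚ) = j + 4 + q by exact_mod_cast hq, show (k : ℚ) = j + 1 by exact_mod_cast hj]
  ext (_ | _ | m)
  · simp [coeff_W_zero, show n ≠ k + 2 by omega, show n ≠ k + 1 by omega, show n ≠ k by omega]
  · rw [coeff_sub, coeff_C_mul_X_add_C_mul_succ, coeff_C_mul, coeff_W_zero (by omega), hW2, hW1,
      hW0]
    simp only [zero_add, Nat.choose_zero_right, Nat.choose_one_right]
    push_cast
    field_simp
    linear_combination choose_recurrence_coeff_one j q hjq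
  · rw [coeff_sub, coeff_C_mul_X_add_C_mul_succ, coeff_C_mul, hW2, hW1, hW1, hW0]
    push_cast
    linear_combination choose_recurrence_coeff_succ_succ j q m hjq

/-- Recurrence for the polynomials W(n,k)(x) with n fixed. -/
theorem stmt5 (n k : ℤ) (hn : 1 ≤ n) (hk : 1 ≤ k) (hk2 : k ≤ (n + 1) / 2 - 2) :
    W n (k + 2) =
      (Polynomial.C (((n - k) * (n - 2 * k - 2) * (n - 2 * k - 3) : ℚ) /
          ((k + 1) * (k + 2) * (n - k - 2))) * X +
        Polynomial.C ((2 * (n - k) * (n - k - 1) * (n - 2 * k - 2) : ℚ) /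
          ((k + 2) * (n - k - 2) * (n - 2 * k - 1)))) * W n (k + 1)
      - Polynomial.C (((n - k + 1) * (n - k) ^ 2 * (n - 2 * k - 3) : ℚ) /
          ((k + 1) * (k + 2) * (n - k - 2) * (n - 2 * k - 1))) * W n k :=
  stmt5_general n k hk hk2
end

section
/- For all integers n, the sum over all k and m of w(n,k,m) equals the Catalan number C_n = (1/(n+1)) * C(2n, n), where w(n,k,m) = (1/k)*C(n,k-1)*C(n-k-1,m-1)*C(k,m) for 0 < m ≤ k, k+m ≤ n, w(n,n,0)=1, and w(n,k,m)=0 otherwise. Equivalently, Σ_{k=0}^{n} W(n,k)(1) = C_n for all n ≥ 0. -/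
open Polynomial

open Finset

lemma w_natCast (n k m : ℕ) :
    w n k m = if 0 < m ∧ m ≤ k ∧ k + m ≤ n then
        (n.choose (k - 1) * (n - k - 1).choose (m - 1) * k.choose m : ℚ) / k
      else if m = 0 ∧ n = k then 1 else 0 := by
  have hn : ((n : ℤ) - k - 1).toNat = n - k - 1 := by omega
  have hk : ((k : ℤ) - 1).toNat = k - 1 := by omega
  have hm : ((m : ℤ) - 1).toNat = m - 1 := by omega
  simp only [w, hn, hk, hm, Int.toNat_natCast, Nat.cast_pos, Nat.cast_le, Nat.cast_inj,
    ← Nat.cast_add, Nat.cast_eq_zero]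
  split_ifs
  · push_cast; ring
  all_goals rfl

lemma eval_one_W (n k : ℕ) : (W n k).eval 1 = ∑ m ∈ range (k + 1), w n k m := by
  simp [W, eval_finsetSum]

lemma eval_one_W_self (n : ℕ) : (W n n).eval 1 = 1 := by
  rw [eval_one_W, sum_range_succ', sum_eq_zero fun m _ => ?_, zero_add, w_natCast,
    if_neg (by omega), if_pos ⟨rfl, rfl⟩]
  rw [w_natCast, if_neg (by omega), if_neg (by omega)]

lemma eval_one_W_zero {n : ℕ} (hn : 0 < n) : (W n 0).eval 1 = 0 := by
  have h := eval_one_W n 0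
  rwa [sum_range_one, w_natCast, if_neg (by omega), if_neg (by omega)] at h

theorem Nat.sum_range_choose_mul_choose_succ (a b : ℕ) :
    ∑ i ∈ range (b + 1), a.choose i * (b + 1).choose (i + 1) = (a + b + 1).choose b := by
  rw [add_assoc, Nat.add_choose_eq,
    Nat.sum_antidiagonal_eq_sum_range_succ (fun i j => a.choose i * (b + 1).choose j)]
  refine sum_congr rfl fun i hi => ?_
  rw [Nat.choose_symm_of_eq_add (n := b + 1) (a := i + 1) (b := b - i) (by simp at hi; omega)]

lemma eval_one_W_of_pos_of_lt {n k : ℕ} (hk : 0 < k) (hkn : k < n) :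
    (W n k).eval 1 = n.choose (k - 1) * (n - 1).choose (k - 1) / k := by
  obtain ⟨j, rfl⟩ : ∃ j, k = j + 1 := ⟨k - 1, by omega⟩
  -- when `j + i + 2 > n` the condition `k + m ≤ n` fails, but then `C(n-j-2, i)` vanishes too
  have hterm : ∀ i ∈ range (j + 1), w n (j + 1 : ℕ) (i + 1 : ℕ) =
      n.choose j / (j + 1) * ((n - j - 2).choose i * (j + 1).choose (i + 1) : ℕ) := by
    intro i hi
    rw [mem_range] at hi
    rw [w_natCast]
    by_cases h : j + i + 2 ≤ n
    · rw [if_pos (by omega), show n - (j + 1) - 1 = n - j - 2 by omega]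
      push_cast; ring
    · rw [if_neg (by omega), if_neg (by omega), Nat.choose_eq_zero_of_lt (by omega : n - j - 2 < i)]
      simp
  rw [eval_one_W, sum_range_succ', w_natCast, if_neg (by omega), if_neg (by omega), add_zero,
    sum_congr rfl hterm, ← mul_sum, ← Nat.cast_sum, Nat.sum_range_choose_mul_choose_succ,
    show n - j - 2 + j + 1 = n - 1 by omega]
  push_cast; ring

lemma succ_mul_eval_one_W {n k : ℕ} (hkn : k ≤ n) :
    (n + 1) * (W n k).eval 1 = ((n + 1).choose k * (n - 1).choose (n - k) : ℕ) := by
  rcases Nat.eq_zero_or_pos k with rfl | hk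
  · rcases Nat.eq_zero_or_pos n with rfl | hn
    · simpa using eval_one_W_self 0
    · simp [eval_one_W_zero hn, Nat.choose_eq_zero_of_lt (by omega : n - 1 < n)]
  rcases hkn.lt_or_eq with hlt | rfl
  · obtain ⟨j, rfl⟩ : ∃ j, k = j + 1 := ⟨k - 1, by omega⟩
    have hpascal : ((n + 1 : ℕ) : ℚ) * n.choose j = (n + 1).choose (j + 1) * (j + 1 : ℕ) := by
      exact_mod_cast Nat.add_one_mul_choose_eq n j
    rw [eval_one_W_of_pos_of_lt hk hlt,
      Nat.choose_symm_of_eq_add (by omega : n - 1 = (n - (j + 1)) + j)]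
    push_cast at hpascal ⊢
    field_simp
    linear_combination ((n - 1).choose j : ℚ) * hpascal
  · simp [eval_one_W_self, Nat.choose_succ_self_right]

theorem Nat.sum_range_choose_mul_choose_pred (n : ℕ) :
    ∑ k ∈ range (n + 1), (n + 1).choose k * (n - 1).choose (n - k) = (2 * n).choose n := by
  rcases Nat.eq_zero_or_pos n with rfl | hn
  · rfl
  rw [show 2 * n = (n + 1) + (n - 1) by omega, Nat.add_choose_eq,
    Nat.sum_antidiagonal_eq_sum_range_succ (fun i j => (n + 1).choose i * (n - 1).choose j)]

/-- Σ_{k=0}^{n} W(n,k)(1) = C_n = (1/(n+1)) C(2n, n) for all n ≥ 0. -/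
theorem stmt10 (n : ℕ) :
    ∑ k ∈ Finset.range (n + 1), (W (n : ℤ) (k : ℤ)).eval 1 =
      (1 / ((n : ℚ) + 1)) * ((2 * n).choose n : ℚ) := by
  have h : ((n : ℚ) + 1) * ∑ k ∈ range (n + 1), (W n k).eval 1 = (2 * n).choose n := by
    rw [mul_sum, sum_congr rfl fun k hk => succ_mul_eval_one_W (Nat.lt_succ_iff.mp (mem_range.mp hk)),
      ← Nat.cast_sum, Nat.sum_range_choose_mul_choose_pred]
  rw [← h]
  field_simp
end

section
/- For all integers n ≥ 1 and 1 ≤ k ≤ n, W(n,k)(1) = N(n,k) := (1/n) * C(n, k-1) * C(n, k), the Narayana number. Here W(n,k)(x) = Σ_{m=0}^{k} w(n,k,m)x^m with w(n,k,m) = (1/k)*C(n,k-1)*C(n-k-1,m-1)*C(k,m) for 0 < m ≤ k, k+m ≤ n, w(n,k,0)=1 if n=k, and 0 otherwise. -/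
open Polynomial

/-!
For `k = n` only the term `w(n,n,0) = 1` survives. For `k < n`, `w(n,k,0) = 0` and
`∑ₘ C(n-k-1, m-1) C(k, m) = C(n-1, k-1)` by Vandermonde's identity, so `W(n,k)(1)` is
`C(n, k-1) C(n-1, k-1) / k`, which is the Narayana number because `k C(n,k) = n C(n-1,k-1)`.
-/

open Finset

theorem Nat.sum_range_choose_mul_choose_succ_s11 (d j : ℕ) :
    ∑ m ∈ range (j + 1), d.choose m * (j + 1).choose (m + 1) = (d + j + 1).choose j := by
  rw [add_assoc, Nat.add_choose_eq, Nat.sum_antidiagonal_eq_sum_range_succ_mk]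
  refine sum_congr rfl fun m hm => ?_
  rw [← Nat.choose_symm (by simpa using hm : m + 1 ≤ j + 1), Nat.add_sub_add_right]

theorem Nat.cast_choose_div_add_one {K : Type*} [Field K] [CharZero K] (n j : ℕ) :
    (n.choose j : K) / (j + 1) = (n + 1).choose (j + 1) / (n + 1) := by
  rw [div_eq_div_iff (Nat.cast_add_one_ne_zero j) (Nat.cast_add_one_ne_zero n)]
  exact_mod_cast (mul_comm _ _).trans (Nat.add_one_mul_choose_eq n j)

theorem W_eval_one (n k : ℤ) : (W n k).eval 1 = ∑ m ∈ range (k.toNat + 1), w n k m := by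
  simp [W, eval_finsetSum]

theorem w_self (n m : ℤ) : w n n m = if m = 0 then 1 else 0 := by
  unfold w
  split_ifs <;> first | rfl | omega

theorem w_zero_of_ne {n k : ℤ} (h : n ≠ k) : w n k 0 = 0 := by
  simp [w, h]

theorem w_natCast_succ (j d m : ℕ) :
    w (j + d + 2 : ℕ) (j + 1 : ℕ) (m + 1 : ℕ) =
      1 / (j + 1 : ℚ) * (j + d + 2).choose j * (d.choose m * (j + 1).choose (m + 1)) := by
  unfold w
  push_cast
  rw [show ((j : ℤ) + d + 2).toNat = j + d + 2 by omega, show ((j : ℤ) + 1 - 1).toNat = j by omega,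
    show ((j : ℤ) + d + 2 - (j + 1) - 1).toNat = d by omega,
    show ((m : ℤ) + 1 - 1).toNat = m by omega, show ((j : ℤ) + 1).toNat = j + 1 by omega,
    show ((m : ℤ) + 1).toNat = m + 1 by omega]
  split_ifs
  · ring
  · omega
  · obtain _ | hd : j < m ∨ d < m := by omega
    · simp [Nat.choose_eq_zero_of_lt (by omega : j + 1 < m + 1)]
    · simp [Nat.choose_eq_zero_of_lt hd]

theorem W_self_eval_one (n : ℤ) : (W n n).eval 1 = 1 := by
  simp [W_eval_one, w_self]

theorem W_eval_one_of_lt (j d : ℕ) :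
    (W (j + d + 2 : ℕ) (j + 1 : ℕ)).eval 1 =
      1 / ((j + d + 2 : ℕ) : ℚ) * (j + d + 2).choose j * (j + d + 2).choose (j + 1) := by
  rw [W_eval_one, Int.toNat_natCast, sum_range_succ', Nat.cast_zero, w_zero_of_ne (by omega),
    add_zero]
  simp only [w_natCast_succ, ← mul_sum]
  have hsum : ∑ m ∈ range (j + 1), (d.choose m * (j + 1).choose (m + 1) : ℚ) =
      (d + j + 1).choose j := by
    exact_mod_cast Nat.sum_range_choose_mul_choose_succ_s11 d j
  have hpascal := Nat.cast_choose_div_add_one (K := ℚ) (d + j + 1) j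
  rw [show d + j + 1 + 1 = j + d + 2 by ring] at hpascal
  rw [hsum]
  push_cast at hpascal ⊢
  linear_combination ((j + d + 2).choose j : ℚ) * hpascal

theorem stmt11_general (n k : ℤ) (hk : 1 ≤ k) (hkn : k ≤ n) :
    (W n k).eval 1 =
      (1 / (n : ℚ)) * (n.toNat.choose (k - 1).toNat : ℚ) * (n.toNat.choose k.toNat : ℚ) := by
  obtain ⟨j, rfl⟩ : ∃ j : ℕ, k = (j + 1 : ℕ) := ⟨(k - 1).toNat, by omega⟩
  rw [show ((j + 1 : ℕ) - 1 : ℤ).toNat = j by omega, Int.toNat_natCast]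
  obtain rfl | hlt := hkn.eq_or_lt
  · rw [W_self_eval_one, Int.toNat_natCast, Nat.choose_succ_self_right, Nat.choose_self]
    push_cast
    field_simp
  · obtain ⟨d, rfl⟩ : ∃ d : ℕ, n = (j + d + 2 : ℕ) := ⟨(n - j - 2).toNat, by omega⟩
    rw [Int.toNat_natCast, Int.cast_natCast, W_eval_one_of_lt]

/-- W(n,k)(1) equals the Narayana number (1/n) C(n, k-1) C(n, k). -/
theorem stmt11 (n k : ℤ) (hn : 1 ≤ n) (hk : 1 ≤ k) (hkn : k ≤ n) :
    (W n k).eval 1 =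
      (1 / (n : ℚ)) * (n.toNat.choose (k - 1).toNat : ℚ) * (n.toNat.choose k.toNat : ℚ) :=
  stmt11_general n k hk hkn
end

section
/- For all integers n, k with 1 ≤ k ≤ n-1, the polynomials W(n,k)(x) and W(n,n-k)(x) have the same set of real zeros. Concretely, for every real number r, W(n,k)(r) = 0 if and only if W(n,n-k)(r) = 0, where W(n,k)(x) = Σ_{m=0}^{k} w(n,k,m)x^m and w(n,k,m) = (1/k)*C(n,k-1)*C(n-k-1,m-1)*C(k,m) for 0 < m ≤ k, k+m ≤ n (with w(n,k,0)=1 if n=k and 0 otherwise). -/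
open Polynomial

lemma aeval_C_mul_eq_zero_iff {K A : Type*} [Field K] [CommSemiring A] [NoZeroDivisors A]
    [Nontrivial A] [Algebra K A] {c : K} (hc : c ≠ 0) (p : K[X]) (r : A) :
    aeval r (C c * p) = 0 ↔ aeval r p = 0 := by
  simp [hc]

noncomputable def reducedW (a b : ℕ) : ℚ[X] :=
  ∑ μ ∈ Finset.range (min a b + 1), C ((a.choose μ * b.choose μ : ℚ) / (μ + 1)) * X ^ (μ + 1)

lemma reducedW_comm (a b : ℕ) : reducedW a b = reducedW b a := by
  rw [reducedW, reducedW, min_comm]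
  refine Finset.sum_congr rfl fun μ _ => ?_
  rw [mul_comm (a.choose μ : ℚ)]

lemma w_zero (a b : ℕ) : w (a + b + 2) (a + 1) 0 = 0 := by
  rw [w, if_neg (by omega), if_neg (by omega)]

lemma w_succ (a b μ : ℕ) :
    w (a + b + 2) (a + 1) (μ + 1) =
      (a + b + 2).choose a * ((a.choose μ * b.choose μ : ℚ) / (μ + 1)) := by
  have hpascal : ((a + 1).choose (μ + 1) : ℚ) = (a + 1) * a.choose μ / (μ + 1) := by
    rw [eq_div_iff (by positivity)]
    exact_mod_cast (Nat.add_one_mul_choose_eq a μ).symm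
  rw [w]
  split_ifs with hm hzero
  · have e1 : ((a : ℤ) + b + 2).toNat = a + b + 2 := by omega
    have e2 : ((a : ℤ) + 1 - 1).toNat = a := by omega
    have e3 : ((a : ℤ) + b + 2 - (a + 1) - 1).toNat = b := by omega
    have e4 : ((μ : ℤ) + 1 - 1).toNat = μ := by omega
    have e5 : ((a : ℤ) + 1).toNat = a + 1 := by omega
    have e6 : ((μ : ℤ) + 1).toNat = μ + 1 := by omega
    push_cast
    rw [e1, e2, e3, e4, e5, e6, hpascal]
    field_simp
  · omega
  · rcases (show a < μ ∨ b < μ by omega) with h | h <;> simp [Nat.choose_eq_zero_of_lt h]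

lemma W_eq_C_choose_mul_reducedW (a b : ℕ) :
    W (a + b + 2) (a + 1) = C ((a + b + 2).choose a : ℚ) * reducedW a b := by
  have hterm (μ : ℕ) (hμ : μ ∉ Finset.range (min a b + 1)) :
      C ((a.choose μ * b.choose μ : ℚ) / (μ + 1)) * X ^ (μ + 1) = 0 := by
    rcases (show a < μ ∨ b < μ by simp at hμ; omega) with h | h <;>
      simp [Nat.choose_eq_zero_of_lt h]
  rw [W, show ((a : ℤ) + 1).toNat = a + 1 by omega, Finset.sum_range_succ', reducedW,
    Finset.sum_subset (Finset.range_subset_range.2 (show min a b + 1 ≤ a + 1 by omega))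
      fun μ _ hμ => hterm μ hμ, Finset.mul_sum]
  push_cast
  simp only [w_succ, w_zero, C_0, zero_mul, add_zero, map_mul, mul_assoc]

/-- For 1 ≤ k ≤ n-1, W(n,k) and W(n,n-k) have the same real zeros. -/
theorem stmt12 (n k : ℤ) (hk : 1 ≤ k) (hkn : k ≤ n - 1) (r : ℝ) :
    Polynomial.aeval r (W n k) = 0 ↔ Polynomial.aeval r (W n (n - k)) = 0 := by
  obtain ⟨a, rfl⟩ : ∃ a : ℕ, k = a + 1 := ⟨(k - 1).toNat, by omega⟩
  obtain ⟨b, rfl⟩ : ∃ b : ℕ, n = a + b + 2 := ⟨(n - a - 2).toNat, by omega⟩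
  have hswap : W (a + b + 2) (a + b + 2 - (a + 1)) = W (b + a + 2) (b + 1) := by
    congr 1 <;> ring
  rw [hswap, W_eq_C_choose_mul_reducedW, W_eq_C_choose_mul_reducedW, reducedW_comm,
    aeval_C_mul_eq_zero_iff, aeval_C_mul_eq_zero_iff] <;>
    exact_mod_cast (Nat.choose_pos (by omega)).ne'
end

section
/- Let {F_i(x)}_{i≥0} be a sequence of real polynomials with nonnegative coefficients such that: (1) F_0 and F_1 are real-rooted with F_0 interlacing F_1 (written F_0 ≼ F_1); (2) deg F_{i+1} equals deg F_i or deg F_i + 1 for all i ≥ 0; (3) there exist real polynomials A_j(x), B_j(x) with F_{j+2}(x) = A_j(x)F_{j+1}(x) + B_j(x)F_j(x) for all j ≥ 0, and B_j(x) ≤ 0 for all real x ≤ 0. Then every F_i is real-rooted and F_i ≼ F_{i+1} for all i ≥ 0 (i.e., {F_i} is a generalized Sturm sequence). -/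
open Polynomial

/-- A real polynomial is real-rooted if its number of real roots (with multiplicity)
equals its degree, i.e. all of its complex roots are real. -/
def RealRooted (F : Polynomial ℝ) : Prop :=
  Multiset.card F.roots = F.natDegree

/-- `Interlaces G F` means `G ≼ F`: listing the zeros of the real-rooted polynomials
`F` and `G` in weakly decreasing order `α₁ ≥ α₂ ≥ ⋯` and `β₁ ≥ β₂ ≥ ⋯`, either
`deg F = deg G = n` and `βₙ ≤ αₙ ≤ βₙ₋₁ ≤ αₙ₋₁ ≤ ⋯ ≤ β₁ ≤ α₁`, or
`deg F = deg G + 1 = n` and `αₙ ≤ βₙ₋₁ ≤ αₙ₋₁ ≤ ⋯ ≤ β₁ ≤ α₁`; by convention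
constants interlace polynomials of degree at most one, and `0` interlaces and is
interlaced by every polynomial. (Below the sorted lists are ascending, so the
indices are reversed.) -/
noncomputable def Interlaces (G F : Polynomial ℝ) : Prop :=
  G = 0 ∨ F = 0 ∨ (F.natDegree ≤ 1 ∧ G.natDegree = 0) ∨
  (RealRooted F ∧ RealRooted G ∧
    (let a := F.roots.sort (· ≤ ·)
     let b := G.roots.sort (· ≤ ·)
     (F.natDegree = G.natDegree ∧ ∀ i < F.natDegree,
        b.getD i 0 ≤ a.getD i 0 ∧ (i + 1 < F.natDegree → a.getD i 0 ≤ b.getD (i + 1) 0)) ∨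
     (F.natDegree = G.natDegree + 1 ∧ ∀ i < G.natDegree,
        a.getD i 0 ≤ b.getD i 0 ∧ b.getD i 0 ≤ a.getD (i + 1) 0)))


/-!
Write `f = F (i + 1)`, `p = F i` and `h = F (i + 2) = a f + b p`. A common zero of `f` and `p`
is a zero of `h` and can be divided out of all three, so by induction on `deg f` they may be
assumed coprime. Then `p ≼ f` forces the zeros `r₁ < ⋯ < rₙ ≤ 0` of `f` to be simple and `p` to
alternate in sign on them, so `h (rₖ) = b (rₖ) p (rₖ)` with `b (rₖ) ≤ 0` alternates weakly in the
opposite way. Together with `h 1 ≥ 0`, the intermediate value theorem splits off a zero of `h`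
in each of `[r₁, r₂], …, [rₙ, 1]`; the remaining factor has degree at most one, and its zero, if
any, lies below `r₁`.
-/

namespace Multiset

variable {α : Type*} [LinearOrder α]

/-- Counting form of `s ≼ u`: sorted decreasingly, `u₁ ≥ s₁ ≥ u₂ ≥ s₂ ≥ ⋯`. -/
def Interlace (s u : Multiset α) : Prop :=
  ∀ t, (s.countP (t < ·) ≤ u.countP (t < ·) ∧ u.countP (t < ·) ≤ s.countP (t < ·) + 1) ∧
    (s.countP (t ≤ ·) ≤ u.countP (t ≤ ·) ∧ u.countP (t ≤ ·) ≤ s.countP (t ≤ ·) + 1)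

variable {s u : Multiset α}

theorem countP_le_add_countP_lt (s : Multiset α) (t : α) :
    s.countP (· ≤ t) + s.countP (t < ·) = card s := by
  simp only [card_eq_countP_add_countP (· ≤ t) s, not_le]

theorem countP_lt_add_countP_le (s : Multiset α) (t : α) :
    s.countP (· < t) + s.countP (t ≤ ·) = card s := by
  simp only [card_eq_countP_add_countP (· < t) s, not_lt]

theorem countP_le_eq_countP_lt_add_count (s : Multiset α) (t : α) :
    s.countP (t ≤ ·) = s.countP (t < ·) + s.count t := by
  induction s using Multiset.induction_on with
  | empty => simp
  | cons a s ih =>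
    simp only [countP_cons, count_cons, ih]
    rcases lt_trichotomy t a with h | rfl | h
    · simp [h, h.le, h.ne]
      omega
    · simp
      omega
    · simp [h.not_gt, h.not_ge, h.ne']

theorem interlace_cons_cons_iff (a : α) : (a ::ₘ s).Interlace (a ::ₘ u) ↔ s.Interlace u := by
  refine forall_congr' fun t => ?_
  simp only [countP_cons]
  split_ifs <;> omega

theorem Interlace.cons_cons_of_le (h : s.Interlace u) {a b : α} (hs : ∀ x ∈ s, x ≤ a)
    (hu : ∀ y ∈ u, y ≤ a) (hab : a ≤ b) : (a ::ₘ s).Interlace (b ::ₘ u) := by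
  intro t
  obtain ⟨⟨h₁, h₂⟩, h₃, h₄⟩ := h t
  simp only [countP_cons]
  constructor
  · by_cases hta : t < a
    · simp only [hta, hta.trans_le hab, if_true]
      omega
    · have hs₀ : s.countP (t < ·) = 0 :=
        countP_eq_zero.2 fun x hx => not_lt.2 ((hs x hx).trans (not_lt.1 hta))
      have hu₀ : u.countP (t < ·) = 0 :=
        countP_eq_zero.2 fun y hy => not_lt.2 ((hu y hy).trans (not_lt.1 hta))
      simp only [hs₀, hu₀, hta, if_false]
      split_ifs <;> omega
  · by_cases hta : t ≤ a
    · simp only [hta, hta.trans hab, if_true]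
      omega
    · have hs₀ : s.countP (t ≤ ·) = 0 :=
        countP_eq_zero.2 fun x hx => not_le.2 ((hs x hx).trans_lt (not_le.1 hta))
      have hu₀ : u.countP (t ≤ ·) = 0 :=
        countP_eq_zero.2 fun y hy => not_le.2 ((hu y hy).trans_lt (not_le.1 hta))
      simp only [hs₀, hu₀, hta, if_false]
      split_ifs <;> omega

theorem Interlace.cons_right_of_forall_le (h : s.Interlace u) (hcard : card u ≤ card s)
    {d : α} (hd : ∀ x ∈ s, d ≤ x) : s.Interlace (d ::ₘ u) := by
  intro t
  obtain ⟨⟨h₁, h₂⟩, h₃, h₄⟩ := h t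
  have hu₁ := countP_le_card (t < ·) u
  have hu₂ := countP_le_card (t ≤ ·) u
  simp only [countP_cons]
  constructor
  · by_cases htd : t < d
    · have : s.countP (t < ·) = card s := countP_eq_card.2 fun x hx => htd.trans_le (hd x hx)
      simp only [htd, if_true]
      omega
    · simp only [htd, if_false]
      omega
  · by_cases htd : t ≤ d
    · have : s.countP (t ≤ ·) = card s := countP_eq_card.2 fun x hx => htd.trans (hd x hx)
      simp only [htd, if_true]
      omega
    · simp only [htd, if_false]
      omega

theorem interlace_add_self (hu : card u ≤ 1) : s.Interlace (u + s) := by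
  intro t
  have := countP_le_card (t < ·) u
  have := countP_le_card (t ≤ ·) u
  simp only [countP_add]
  omega

theorem Interlace.mem_of_two_le_count (h : s.Interlace u) {r : α} (hr : 2 ≤ u.count r) :
    r ∈ s := by
  rw [← count_pos]
  obtain ⟨⟨h₁, -⟩, -, h₄⟩ := h r
  have := countP_le_eq_countP_lt_add_count s r
  have := countP_le_eq_countP_lt_add_count u r
  omega

theorem Interlace.countP_lt_eq (h : s.Interlace u) {r : α} (hru : r ∈ u) (hrs : r ∉ s) :
    s.countP (r < ·) = u.countP (r < ·) := by
  obtain ⟨⟨h₁, -⟩, -, h₄⟩ := h r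
  have := countP_le_eq_countP_lt_add_count s r
  have := countP_le_eq_countP_lt_add_count u r
  have := count_pos.2 hru
  have := count_eq_zero.2 hrs
  omega

theorem Interlace.card_le [Nonempty α] (h : s.Interlace u) :
    card s ≤ card u ∧ card u ≤ card s + 1 := by
  obtain ⟨t, ht⟩ := (s + u).toFinset.bddBelow
  have hs : s.countP (t ≤ ·) = card s := countP_eq_card.2 fun x hx => ht (by simp [hx])
  have hu : u.countP (t ≤ ·) = card u := countP_eq_card.2 fun x hx => ht (by simp [hx])
  have := (h t).2
  omega

theorem countP_sort (s : Multiset α) (P : α → Prop) [DecidablePred P] :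
    (s.sort (· ≤ ·)).countP (P ·) = s.countP P := by
  rw [← coe_countP, sort_eq]

theorem interlace_iff_of_card_eq (hsu : card u = card s) : s.Interlace u ↔ ∀ t,
    (u.countP (· ≤ t) ≤ s.countP (· ≤ t) ∧ s.countP (· ≤ t) ≤ u.countP (· ≤ t) + 1) ∧
    (u.countP (· < t) ≤ s.countP (· < t) ∧ s.countP (· < t) ≤ u.countP (· < t) + 1) := by
  refine forall_congr' fun t => ?_
  have := countP_le_add_countP_lt s t
  have := countP_le_add_countP_lt u t
  have := countP_lt_add_countP_le s t
  have := countP_lt_add_countP_le u t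
  omega

theorem interlace_iff_of_card_eq_add_one (hsu : card u = card s + 1) : s.Interlace u ↔ ∀ t,
    (s.countP (· ≤ t) ≤ u.countP (· ≤ t) ∧ u.countP (· ≤ t) ≤ s.countP (· ≤ t) + 1) ∧
    (s.countP (· < t) ≤ u.countP (· < t) ∧ u.countP (· < t) ≤ s.countP (· < t) + 1) := by
  refine forall_congr' fun t => ?_
  have := countP_le_add_countP_lt s t
  have := countP_le_add_countP_lt u t
  have := countP_lt_add_countP_le s t
  have := countP_lt_add_countP_le u t
  omega

end Multiset

namespace List

variable {α : Type*} [LinearOrder α] {x y : List α} (d : α)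

theorem Pairwise.getD_iff_lt_countP {l : List α} (hl : l.Pairwise (· ≤ ·)) {P : α → Bool}
    (hP : ∀ a b, a ≤ b → P b → P a) {i : ℕ} (hi : i < l.length) :
    P (l.getD i d) ↔ i < l.countP P := by
  induction l generalizing i with
  | nil => simp at hi
  | cons a l ih =>
    rw [pairwise_cons] at hl
    by_cases ha : P a
    · rw [countP_cons_of_pos ha]
      cases i with
      | zero => simp [ha]
      | succ i => simpa using ih hl.2 (by simpa using hi)
    · have hl₀ : l.countP P = 0 :=
        countP_eq_zero.2 fun b hb hPb => ha (hP a b (hl.1 b hb) hPb)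
      rw [countP_cons_of_neg ha, hl₀]
      cases i with
      | zero => simpa using ha
      | succ i =>
        have hi : i < l.length := by simpa using hi
        simp only [getD_cons_succ, getD_eq_getElem _ _ hi, Nat.not_lt_zero, iff_false]
        exact fun hPi => ha (hP a _ (hl.1 _ (getElem_mem hi)) hPi)

theorem countP_le_countP_of_getD_le (hx : x.Pairwise (· ≤ ·)) (hy : y.Pairwise (· ≤ ·))
    (hlen : x.length ≤ y.length) (hxy : ∀ i < x.length, y.getD i d ≤ x.getD i d)
    {P : α → Bool} (hP : ∀ a b, a ≤ b → P b → P a) : x.countP P ≤ y.countP P := by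
  by_contra! hlt
  have hix : y.countP P < x.length := hlt.trans_le (countP_le_length)
  have := (hx.getD_iff_lt_countP d hP hix).2 hlt
  have := (hy.getD_iff_lt_countP d hP (hix.trans_le hlen)).1 (hP _ _ (hxy _ hix) this)
  omega

theorem countP_le_countP_add_one_of_le_getD_succ (hx : x.Pairwise (· ≤ ·))
    (hy : y.Pairwise (· ≤ ·)) (hlen : y.length ≤ x.length + 1)
    (hxy : ∀ i, i + 1 < y.length → x.getD i d ≤ y.getD (i + 1) d)
    {P : α → Bool} (hP : ∀ a b, a ≤ b → P b → P a) : y.countP P ≤ x.countP P + 1 := by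
  by_contra! hlt
  have hiy : x.countP P + 1 < y.length := hlt.trans_le (countP_le_length)
  have := (hy.getD_iff_lt_countP d hP hiy).2 hlt
  have := (hx.getD_iff_lt_countP d hP (by omega)).1 (hP _ _ (hxy _ hiy) this)
  omega

theorem getD_le_getD_of_countP_le (hx : x.Pairwise (· ≤ ·)) (hy : y.Pairwise (· ≤ ·))
    (h : ∀ t, x.countP (· ≤ t) ≤ y.countP (· ≤ t)) {i : ℕ} (hix : i < x.length)
    (hiy : i < y.length) : y.getD i d ≤ x.getD i d := by
  have hP : ∀ a b : α, a ≤ b → decide (b ≤ x.getD i d) → decide (a ≤ x.getD i d) := by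
    simp only [decide_eq_true_eq]
    exact fun a b hab hb => hab.trans hb
  have := (hx.getD_iff_lt_countP d hP hix).1 (by simp)
  simpa using (hy.getD_iff_lt_countP d hP hiy).2 (this.trans_le (h _))

theorem getD_le_getD_succ_of_countP_le_add_one (hx : x.Pairwise (· ≤ ·))
    (hy : y.Pairwise (· ≤ ·)) (h : ∀ t, y.countP (· ≤ t) ≤ x.countP (· ≤ t) + 1) {i : ℕ}
    (hix : i < x.length) (hiy : i + 1 < y.length) : x.getD i d ≤ y.getD (i + 1) d := by
  have hP : ∀ a b : α, a ≤ b → decide (b ≤ y.getD (i + 1) d) →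
      decide (a ≤ y.getD (i + 1) d) := by
    simp only [decide_eq_true_eq]
    exact fun a b hab hb => hab.trans hb
  have := (hy.getD_iff_lt_countP d hP hiy).1 (by simp)
  simpa using (hx.getD_iff_lt_countP d hP hix).2 (by have := h (y.getD (i + 1) d); omega)

end List

theorem realRooted_iff_splits {F : Polynomial ℝ} : RealRooted F ↔ F.Splits :=
  splits_iff_card_roots.symm

theorem interlace_roots_of_interlaces {G F : Polynomial ℝ} (hG₀ : G ≠ 0) (hF₀ : F ≠ 0)
    (hG : G.Splits) (hF : F.Splits) (h : Interlaces G F) : G.roots.Interlace F.roots := by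
  rw [← realRooted_iff_splits] at hG hF
  set a := F.roots.sort (· ≤ ·)
  set b := G.roots.sort (· ≤ ·)
  have ha : a.Pairwise (· ≤ ·) := F.roots.pairwise_sort _
  have hb : b.Pairwise (· ≤ ·) := G.roots.pairwise_sort _
  have hla : a.length = F.natDegree := by rw [Multiset.length_sort, hF]
  have hlb : b.length = G.natDegree := by rw [Multiset.length_sort, hG]
  have hle (t : ℝ) : ∀ x y : ℝ, x ≤ y → decide (y ≤ t) → decide (x ≤ t) := by
    simpa using fun x y hxy hyt => hxy.trans hyt
  have hlt (t : ℝ) : ∀ x y : ℝ, x ≤ y → decide (y < t) → decide (x < t) := by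
    simpa using fun x y hxy hyt => hxy.trans_lt hyt
  rcases h with h | h | ⟨hF₁, hG₀'⟩ | ⟨-, -, ⟨hd, hab⟩ | ⟨hd, hab⟩⟩
  · exact absurd h hG₀
  · exact absurd h hF₀
  · rw [show G.roots = 0 from Multiset.card_eq_zero.1 (Nat.le_zero.1 (hG₀' ▸ card_roots' G))]
    simpa using Multiset.interlace_add_self (s := 0) (hF.trans_le hF₁)
  · have key {P : ℝ → Bool} (hP : ∀ x y, x ≤ y → P y → P x) :
        a.countP P ≤ b.countP P ∧ b.countP P ≤ a.countP P + 1 :=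
      ⟨List.countP_le_countP_of_getD_le 0 ha hb (by omega) (fun i hi => (hab i (by omega)).1) hP,
        List.countP_le_countP_add_one_of_le_getD_succ 0 ha hb (by omega)
          (fun i hi => (hab i (by omega)).2 (by omega)) hP⟩
    rw [Multiset.interlace_iff_of_card_eq (by rw [hF, hG, hd])]
    intro t
    simp only [← Multiset.countP_sort]
    exact ⟨key (hle t), key (hlt t)⟩
  · have key {P : ℝ → Bool} (hP : ∀ x y, x ≤ y → P y → P x) :
        b.countP P ≤ a.countP P ∧ a.countP P ≤ b.countP P + 1 :=
      ⟨List.countP_le_countP_of_getD_le 0 hb ha (by omega) (fun i hi => (hab i (by omega)).1) hP,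
        List.countP_le_countP_add_one_of_le_getD_succ 0 hb ha (by omega)
          (fun i hi => (hab i (by omega)).2) hP⟩
    rw [Multiset.interlace_iff_of_card_eq_add_one (by rw [hF, hG, hd])]
    intro t
    simp only [← Multiset.countP_sort]
    exact ⟨key (hle t), key (hlt t)⟩

theorem interlaces_of_interlace_roots {G F : Polynomial ℝ} (hG : G.Splits) (hF : F.Splits)
    (h : G.roots.Interlace F.roots) : Interlaces G F := by
  rw [← realRooted_iff_splits] at hG hF
  refine Or.inr (Or.inr (Or.inr ⟨hF, hG, ?_⟩))
  set a := F.roots.sort (· ≤ ·)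
  set b := G.roots.sort (· ≤ ·)
  have ha : a.Pairwise (· ≤ ·) := F.roots.pairwise_sort _
  have hb : b.Pairwise (· ≤ ·) := G.roots.pairwise_sort _
  have hla : a.length = F.natDegree := by rw [Multiset.length_sort, hF]
  have hlb : b.length = G.natDegree := by rw [Multiset.length_sort, hG]
  obtain ⟨h₁, h₂⟩ := h.card_le
  rw [hF, hG] at h₁ h₂
  rcases (show F.natDegree = G.natDegree ∨ F.natDegree = G.natDegree + 1 by omega) with hd | hd
  · rw [Multiset.interlace_iff_of_card_eq (by rw [hF, hG, hd])] at h
    simp only [← Multiset.countP_sort] at h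
    refine Or.inl ⟨hd, fun i hi => ⟨?_, fun hi' => ?_⟩⟩
    · exact List.getD_le_getD_of_countP_le 0 ha hb (fun t => (h t).1.1) (by omega) (by omega)
    · exact List.getD_le_getD_succ_of_countP_le_add_one 0 ha hb (fun t => (h t).1.2)
        (by omega) (by omega)
  · rw [Multiset.interlace_iff_of_card_eq_add_one (by rw [hF, hG, hd])] at h
    simp only [← Multiset.countP_sort] at h
    refine Or.inr ⟨hd, fun i hi => ⟨?_, ?_⟩⟩
    · exact List.getD_le_getD_of_countP_le 0 hb ha (fun t => (h t).1.1) (by omega) (by omega)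
    · exact List.getD_le_getD_succ_of_countP_le_add_one 0 hb ha (fun t => (h t).1.2)
        (by omega) (by omega)

theorem Multiset.neg_one_pow_countP_mul_prod_map_sub_pos {s : Multiset ℝ} {ρ : ℝ}
    (hρ : ρ ∉ s) : 0 < (-1) ^ s.countP (ρ < ·) * (s.map (ρ - ·)).prod := by
  induction s using Multiset.induction_on with
  | empty => simp
  | cons a s ih =>
    rw [Multiset.mem_cons, not_or] at hρ
    have hpos := ih hρ.2
    rw [Multiset.countP_cons, Multiset.map_cons, Multiset.prod_cons]
    rcases Ne.lt_or_gt hρ.1 with hlt | hgt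
    · rw [if_pos hlt, pow_succ]
      nlinarith
    · rw [if_neg (not_lt.2 hgt.le), add_zero]
      nlinarith

namespace Polynomial

theorem Splits.neg_one_pow_countP_mul_eval_pos {p : ℝ[X]} (hp : p.Splits)
    (hlc : 0 < p.leadingCoeff) {ρ : ℝ} (hρ : ρ ∉ p.roots) :
    0 < (-1) ^ p.roots.countP (ρ < ·) * p.eval ρ := by
  rw [hp.eval_eq_prod_roots, mul_left_comm]
  exact mul_pos hlc (Multiset.neg_one_pow_countP_mul_prod_map_sub_pos hρ)

theorem roots_X_sub_C_mul {q : ℝ[X]} (hq : q ≠ 0) (r : ℝ) :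
    ((X - C r) * q).roots = r ::ₘ q.roots := by
  rw [roots_mul (mul_ne_zero (X_sub_C_ne_zero r) hq), roots_X_sub_C, Multiset.singleton_add]

theorem exists_mem_Ioc_eq_X_sub_C_mul_of_eval_neg {h : ℝ[X]} {u v : ℝ} (huv : u ≤ v)
    (hu : h.eval u < 0) (hv : 0 ≤ h.eval v) :
    ∃ γ ∈ Set.Ioc u v, ∃ h₁ : ℝ[X], h = (X - C γ) * h₁ ∧ 0 < h₁.eval u := by
  obtain ⟨γ, hγ, hγ₀⟩ :=
    intermediate_value_Ioc huv h.continuous.continuousOn ⟨hu, hv⟩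
  refine ⟨γ, hγ, h /ₘ (X - C γ), (mul_divByMonic_eq_iff_isRoot.2 hγ₀).symm, ?_⟩
  have hu' := hu
  rw [← mul_divByMonic_eq_iff_isRoot.2 hγ₀, eval_mul, eval_sub, eval_X, eval_C] at hu'
  nlinarith [hγ.1]

theorem exists_mem_Icc_eq_X_sub_C_mul {h : ℝ[X]} {u v : ℝ} (huv : u < v)
    (hu : h.eval u ≤ 0) (hv : 0 ≤ h.eval v) :
    ∃ γ ∈ Set.Icc u v, ∃ h₁ : ℝ[X], h = (X - C γ) * h₁ ∧ 0 ≤ h₁.eval u := by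
  rcases hu.lt_or_eq with hu | hu
  · obtain ⟨γ, hγ, h₁, hh, hh₁⟩ := exists_mem_Ioc_eq_X_sub_C_mul_of_eval_neg huv.le hu hv
    exact ⟨γ, Set.Ioc_subset_Icc_self hγ, h₁, hh, hh₁.le⟩
  set q := h /ₘ (X - C u)
  have hhq : h = (X - C u) * q := (mul_divByMonic_eq_iff_isRoot.2 hu).symm
  by_cases hq : 0 ≤ q.eval u
  · exact ⟨u, ⟨le_rfl, huv.le⟩, q, hhq, hq⟩
  -- `u` is a root of `h` but the cofactor `q` is negative at `u`, so `q` has a root in `(u, v]`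
  have hqv : 0 ≤ q.eval v := by
    rw [hhq, eval_mul, eval_sub, eval_X, eval_C] at hv
    nlinarith
  obtain ⟨γ, hγ, q₁, hqq, -⟩ := exists_mem_Ioc_eq_X_sub_C_mul_of_eval_neg huv.le (not_le.1 hq) hqv
  exact ⟨γ, Set.Ioc_subset_Icc_self hγ, (X - C u) * q₁, by rw [hhq, hqq]; ring, by simp⟩

theorem le_of_mem_roots_of_eval_nonneg {q : ℝ[X]} (hq : q.natDegree ≤ 1)
    (hlc : 0 < q.leadingCoeff) {x δ : ℝ} (hx : 0 ≤ q.eval x) (hδ : δ ∈ q.roots) : δ ≤ x := by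
  set q₁ := q /ₘ (X - C δ)
  have hqq : q = (X - C δ) * q₁ :=
    (mul_divByMonic_eq_iff_isRoot.2 (isRoot_of_mem_roots hδ)).symm
  have hq₁ : q₁ ≠ 0 := right_ne_zero_of_mul (hqq ▸ leadingCoeff_ne_zero.1 hlc.ne')
  have hdeg : q₁.natDegree = 0 := by
    rw [hqq, natDegree_mul (X_sub_C_ne_zero δ) hq₁, natDegree_X_sub_C] at hq
    omega
  have hlc₁ : q.leadingCoeff = q₁.coeff 0 := by
    rw [hqq, leadingCoeff_mul, leadingCoeff_X_sub_C, one_mul, leadingCoeff, hdeg]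
  rw [hqq, eval_mul, eq_C_of_natDegree_eq_zero hdeg, ← hlc₁] at hx
  simp only [eval_sub, eval_X, eval_C] at hx
  linarith [(mul_nonneg_iff_of_pos_right hlc).1 hx]

open Finset in
theorem exists_prod_X_sub_C_mul_of_sign_alternation (s : Finset ℝ) {h : ℝ[X]} {c : ℝ}
    (hc : ∀ r ∈ s, r < c) (hhc : 0 ≤ h.eval c)
    (hsign : ∀ r ∈ s, 0 ≤ (-1) ^ (#{x ∈ s | r < x} + 1) * h.eval r) :
    ∃ (γ : Multiset ℝ) (q : ℝ[X]) (x : ℝ), h = (γ.map (X - C ·)).prod * q ∧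
      Multiset.card γ = #s ∧ (∀ g ∈ γ, g ≤ c) ∧ s.val.Interlace γ ∧
      x ≤ c ∧ (∀ r ∈ s, x ≤ r) ∧ 0 ≤ q.eval x := by
  induction s using Finset.induction_on_max generalizing h c with
  | empty =>
    refine ⟨0, h, c, by simp, rfl, by simp, fun t => by simp, le_rfl, by simp, hhc⟩
  | insert a s hlt ih =>
    have has : a ∉ s := fun ha => lt_irrefl a (hlt a ha)
    have ha : h.eval a ≤ 0 := by
      have hcount : #{x ∈ insert a s | a < x} = 0 := by
        rw [card_eq_zero, filter_eq_empty_iff]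
        intro x hx
        rcases mem_insert.1 hx with rfl | hx
        exacts [lt_irrefl x, (hlt x hx).not_gt]
      simpa [hcount] using hsign a (mem_insert_self a s)
    obtain ⟨γ₀, ⟨hγ₀a, hγ₀c⟩, h₁, hh, hh₁⟩ :=
      exists_mem_Icc_eq_X_sub_C_mul (hc a (mem_insert_self a s)) ha hhc
    have hsign₁ : ∀ r ∈ s, 0 ≤ (-1) ^ (#{x ∈ s | r < x} + 1) * h₁.eval r := by
      intro r hr
      have hcount : #{x ∈ insert a s | r < x} = #{x ∈ s | r < x} + 1 := by
        rw [filter_insert, if_pos (hlt r hr), card_insert_of_notMem (by simp [has])]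
      have hr' := hsign r (mem_insert_of_mem hr)
      rw [hcount, hh, eval_mul, eval_sub, eval_X, eval_C] at hr'
      refine (mul_nonneg_iff_of_pos_left (sub_pos.2 ((hlt r hr).trans_le hγ₀a))).1 ?_
      calc 0 ≤ (-1) ^ (#{x ∈ s | r < x} + 1 + 1) * ((r - γ₀) * h₁.eval r) := hr'
        _ = (γ₀ - r) * ((-1) ^ (#{x ∈ s | r < x} + 1) * h₁.eval r) := by ring
    obtain ⟨γ, q, x, hfac, hcard, hγa, hsγ, hxa, hxs, hqx⟩ := ih hlt hh₁ hsign₁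
    refine ⟨γ₀ ::ₘ γ, q, x, ?_, ?_, ?_, ?_, ?_, ?_, hqx⟩
    · rw [hh, hfac, Multiset.map_cons, Multiset.prod_cons, mul_assoc]
    · rw [Multiset.card_cons, hcard, card_insert_of_notMem has]
    · intro g hg
      rcases Multiset.mem_cons.1 hg with rfl | hg
      exacts [hγ₀c, (hγa g hg).trans (hc a (mem_insert_self a s)).le]
    · rw [insert_val_of_notMem has]
      exact hsγ.cons_cons_of_le (fun y hy => (hlt y hy).le) hγa hγ₀a
    · exact hxa.trans (hc a (mem_insert_self a s)).le
    · intro r hr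
      rcases mem_insert.1 hr with rfl | hr
      exacts [hxa, hxs r hr]

theorem neg_one_pow_mul_eval_nonneg_of_interlace {f p a b h : ℝ[X]} (hp : p.Splits)
    (hplc : 0 < p.leadingCoeff) (hpf : p.roots.Interlace f.roots) (hrec : h = a * f + b * p)
    {r : ℝ} (hrf : r ∈ f.roots) (hrp : r ∉ p.roots) (hb : b.eval r ≤ 0) :
    0 ≤ (-1) ^ (f.roots.countP (r < ·) + 1) * h.eval r := by
  have hfr : f.eval r = 0 := isRoot_of_mem_roots hrf
  have heval : h.eval r = b.eval r * p.eval r := by simp [hrec, hfr]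
  have := hp.neg_one_pow_countP_mul_eval_pos hplc hrp
  rw [← hpf.countP_lt_eq hrf hrp, heval, pow_succ]
  nlinarith

theorem splits_and_interlace_roots_of_eq_prod_mul {h q : ℝ[X]} {s γ : Multiset ℝ} {x : ℝ}
    (hfac : h = (γ.map (X - C ·)).prod * q) (hh₀ : h ≠ 0) (hhlc : 0 ≤ h.leadingCoeff)
    (hdeg : h.natDegree ≤ Multiset.card γ + 1) (hsγ : s.Interlace γ)
    (hγs : Multiset.card γ ≤ Multiset.card s) (hxs : ∀ r ∈ s, x ≤ r) (hqx : 0 ≤ q.eval x) :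
    h.Splits ∧ s.Interlace h.roots := by
  set P := (γ.map (X - C ·)).prod
  have hPm : P.Monic := monic_multiset_prod_of_monic _ _ fun r _ => monic_X_sub_C r
  have hq₀ : q ≠ 0 := right_ne_zero_of_mul (hfac ▸ hh₀)
  have hdq : q.natDegree ≤ 1 := by
    rw [hfac, natDegree_mul hPm.ne_zero hq₀, natDegree_multiset_prod_X_sub_C_eq_card] at hdeg
    omega
  have hroots : h.roots = γ + q.roots := by
    rw [hfac, roots_mul (hfac ▸ hh₀), roots_multiset_prod_X_sub_C]
  have hPs : P.Splits := Splits.multisetProd fun g hg => by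
    obtain ⟨r, -, rfl⟩ := Multiset.mem_map.1 hg
    exact Splits.X_sub_C r
  refine ⟨hfac ▸ hPs.mul (Splits.of_natDegree_le_one hdq), ?_⟩
  obtain hq | ⟨δ, hδ⟩ := Multiset.empty_or_exists_mem q.roots
  · rwa [hroots, hq, add_zero]
  have hqδ : q.roots = {δ} := (Multiset.eq_of_le_of_card_le (Multiset.singleton_le.2 hδ)
    ((card_roots' q).trans (by simpa using hdq))).symm
  have hqc : 0 < q.leadingCoeff := by
    rw [← one_mul q.leadingCoeff, ← hPm.leadingCoeff, ← leadingCoeff_mul, ← hfac]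
    exact hhlc.lt_of_ne (leadingCoeff_ne_zero.2 hh₀).symm
  rw [hroots, hqδ, Multiset.add_comm, Multiset.singleton_add]
  exact hsγ.cons_right_of_forall_le hγs fun r hr =>
    (le_of_mem_roots_of_eval_nonneg hdq hqc hqx hδ).trans (hxs r hr)

theorem splits_and_interlace_roots_of_disjoint_roots {f p a b h : ℝ[X]} {c : ℝ} (hf : f.Splits)
    (hp : p.Splits) (hplc : 0 < p.leadingCoeff) (hpf : p.roots.Interlace f.roots)
    (hdisj : ∀ r ∈ f.roots, r ∉ p.roots) (hh₀ : h ≠ 0) (hhlc : 0 ≤ h.leadingCoeff)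
    (hrec : h = a * f + b * p) (hb : ∀ r ∈ f.roots, b.eval r ≤ 0)
    (hc : ∀ r ∈ f.roots, r < c) (hhc : 0 ≤ h.eval c) (hdeg : h.natDegree ≤ f.natDegree + 1) :
    h.Splits ∧ f.roots.Interlace h.roots := by
  have hnodup : f.roots.Nodup := Multiset.nodup_iff_count_le_one.2 fun r => by
    by_contra! hr
    exact hdisj r (Multiset.count_pos.1 (by omega)) (hpf.mem_of_two_le_count hr)
  set s := f.roots.toFinset
  have hs : s.val = f.roots := (Multiset.toFinset_val _).trans (Multiset.dedup_eq_self.2 hnodup)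
  obtain ⟨γ, q, x, hfac, hcard, -, hsγ, -, hxs, hqx⟩ :=
    exists_prod_X_sub_C_mul_of_sign_alternation s
      (fun r hr => hc r (Multiset.mem_toFinset.1 hr)) hhc fun r hr => by
        rw [Multiset.mem_toFinset] at hr
        have hcount : (s.filter (r < ·)).card = f.roots.countP (r < ·) := by
          rw [← hs, Multiset.countP_eq_card_filter]; rfl
        rw [hcount]
        exact neg_one_pow_mul_eval_nonneg_of_interlace hp hplc hpf hrec hr (hdisj r hr) (hb r hr)
  rw [Finset.card_def, hs] at hcard
  rw [hs] at hsγ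
  exact splits_and_interlace_roots_of_eq_prod_mul hfac hh₀ hhlc
    (by rwa [hcard, ← hf.natDegree_eq_card_roots]) hsγ hcard.le
    (fun r hr => hxs r (Multiset.mem_toFinset.2 hr)) hqx

theorem splits_mul_and_interlace_roots {a f : ℝ[X]} (ha : a.natDegree ≤ 1) (hf : f.Splits)
    (haf : a * f ≠ 0) : (a * f).Splits ∧ f.roots.Interlace (a * f).roots := by
  refine ⟨(Splits.of_natDegree_le_one ha).mul hf, ?_⟩
  rw [roots_mul haf]
  exact Multiset.interlace_add_self ((card_roots' a).trans ha)

theorem splits_and_interlace_roots_of_eq_mul_add_mul {f p a b h : ℝ[X]} {c : ℝ}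
    (hf : f.Splits) (hp : p.Splits) (hplc : 0 < p.leadingCoeff)
    (hpf : p.roots.Interlace f.roots) (hh₀ : h ≠ 0) (hhlc : 0 ≤ h.leadingCoeff)
    (hrec : h = a * f + b * p) (hb : ∀ r ∈ f.roots, b.eval r ≤ 0)
    (hc : ∀ r ∈ f.roots, r < c) (hhc : 0 ≤ h.eval c) (hdeg : h.natDegree ≤ f.natDegree + 1) :
    h.Splits ∧ f.roots.Interlace h.roots := by
  induction hn : f.natDegree using Nat.strong_induction_on generalizing f p h with
  | _ n ih =>
  by_cases hcom : ∃ r ∈ f.roots, r ∈ p.roots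
  swap
  · exact splits_and_interlace_roots_of_disjoint_roots hf hp hplc hpf
      (fun r hrf hrp => hcom ⟨r, hrf, hrp⟩) hh₀ hhlc hrec hb hc hhc hdeg
  obtain ⟨r, hrf, hrp⟩ := hcom
  obtain ⟨f₁, rfl⟩ := dvd_iff_isRoot.2 (isRoot_of_mem_roots hrf)
  obtain ⟨p₁, rfl⟩ := dvd_iff_isRoot.2 (isRoot_of_mem_roots hrp)
  set h₁ := a * f₁ + b * p₁
  have hh : h = (X - C r) * h₁ := by rw [hrec]; ring
  subst hh
  have hf₁ : f₁ ≠ 0 := right_ne_zero_of_mul (ne_zero_of_mem_roots hrf)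
  have hp₁ : p₁ ≠ 0 := right_ne_zero_of_mul (ne_zero_of_mem_roots hrp)
  have hh₁ : h₁ ≠ 0 := right_ne_zero_of_mul hh₀
  have hroots : ∀ x ∈ f₁.roots, x ∈ ((X - C r) * f₁).roots := fun x hx =>
    roots_X_sub_C_mul hf₁ r ▸ Multiset.mem_cons_of_mem hx
  have hdeg₁ : ∀ {q : ℝ[X]}, q ≠ 0 → ((X - C r) * q).natDegree = q.natDegree + 1 := fun hq => by
    rw [natDegree_mul (X_sub_C_ne_zero r) hq, natDegree_X_sub_C, add_comm]
  have hrc : 0 < c - r := sub_pos.2 (hc r hrf)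
  rw [leadingCoeff_monic_mul (monic_X_sub_C r)] at hplc hhlc
  rw [eval_mul, eval_sub, eval_X, eval_C] at hhc
  rw [roots_X_sub_C_mul hp₁, roots_X_sub_C_mul hf₁, Multiset.interlace_cons_cons_iff] at hpf
  rw [hdeg₁ hh₁, hdeg₁ hf₁] at hdeg
  obtain ⟨hs₁, hi₁⟩ := ih f₁.natDegree (by rw [← hn, hdeg₁ hf₁]; omega)
    (splits_X_sub_C_mul_iff.1 hf) (splits_X_sub_C_mul_iff.1 hp) hplc hpf hh₁ hhlc rfl
    (fun x hx => hb x (hroots x hx)) (fun x hx => hc x (hroots x hx))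
    ((mul_nonneg_iff_of_pos_left hrc).1 hhc) (by omega) rfl
  refine ⟨splits_X_sub_C_mul_iff.2 hs₁, ?_⟩
  rwa [roots_X_sub_C_mul hh₁, roots_X_sub_C_mul hf₁, Multiset.interlace_cons_cons_iff]

theorem splits_and_interlaces_of_eq_mul_add_mul {f p a b h : ℝ[X]} {c : ℝ}
    (hf : f.Splits) (hp : p.Splits) (hpf : Interlaces p f) (hplc : 0 ≤ p.leadingCoeff)
    (hhlc : 0 ≤ h.leadingCoeff) (hrec : h = a * f + b * p) (hb : ∀ r ∈ f.roots, b.eval r ≤ 0)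
    (hc : ∀ r ∈ f.roots, r < c) (hhc : 0 ≤ h.eval c) (hdeg : h.natDegree ≤ f.natDegree + 1) :
    h.Splits ∧ Interlaces f h := by
  rcases Nat.eq_zero_or_pos f.natDegree with hfd | hfd
  · exact ⟨Splits.of_natDegree_le_one (by omega), Or.inr (Or.inr (Or.inl ⟨by omega, hfd⟩))⟩
  have hf₀ : f ≠ 0 := by rintro rfl; simp at hfd
  rcases eq_or_ne h 0 with rfl | hh₀
  · exact ⟨Splits.zero, Or.inr (Or.inl rfl)⟩
  suffices key : h.Splits ∧ f.roots.Interlace h.roots from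
    ⟨key.1, interlaces_of_interlace_roots hf key.1 key.2⟩
  rcases eq_or_ne p 0 with rfl | hp₀
  · rw [mul_zero, add_zero] at hrec
    subst hrec
    refine splits_mul_and_interlace_roots ?_ hf hh₀
    rw [natDegree_mul (left_ne_zero_of_mul hh₀) hf₀] at hdeg
    omega
  exact splits_and_interlace_roots_of_eq_mul_add_mul hf hp
    (hplc.lt_of_ne (leadingCoeff_ne_zero.2 hp₀).symm)
    (interlace_roots_of_interlaces hp₀ hf₀ hp hf hpf) hh₀ hhlc hrec hb hc hhc hdeg

theorem eval_nonneg_of_coeff_nonneg {q : ℝ[X]} (hq : ∀ j, 0 ≤ q.coeff j) {x : ℝ} (hx : 0 ≤ x) :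
    0 ≤ q.eval x := by
  rw [eval_eq_sum_range]
  exact Finset.sum_nonneg fun j _ => mul_nonneg (hq j) (pow_nonneg hx j)

theorem nonpos_of_mem_roots_of_coeff_nonneg {q : ℝ[X]} (hq : ∀ j, 0 ≤ q.coeff j) {r : ℝ}
    (hr : r ∈ q.roots) : r ≤ 0 := by
  by_contra! hr₀
  have hlc : 0 < q.leadingCoeff :=
    (hq _).lt_of_ne (leadingCoeff_ne_zero.2 (ne_zero_of_mem_roots hr)).symm
  have : 0 < q.eval r := by
    rw [eval_eq_sum_range]
    exact Finset.sum_pos' (fun j _ => mul_nonneg (hq j) (pow_nonneg hr₀.le j))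
      ⟨q.natDegree, Finset.self_mem_range_succ _, mul_pos hlc (pow_pos hr₀ _)⟩
  exact this.ne' (isRoot_of_mem_roots hr)

end Polynomial

/-- Liu–Wang criterion: a sequence of nonnegative polynomials satisfying a suitable
three-term recurrence is a generalized Sturm sequence. -/
theorem stmt14 (F : ℕ → Polynomial ℝ)
    (hnonneg : ∀ i j, 0 ≤ (F i).coeff j)
    (h0 : RealRooted (F 0)) (h1 : RealRooted (F 1)) (h01 : Interlaces (F 0) (F 1))
    (hdeg : ∀ i, (F (i + 1)).natDegree = (F i).natDegree ∨
      (F (i + 1)).natDegree = (F i).natDegree + 1)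
    (A B : ℕ → Polynomial ℝ)
    (hrec : ∀ j, F (j + 2) = A j * F (j + 1) + B j * F j)
    (hB : ∀ j, ∀ x : ℝ, x ≤ 0 → (B j).eval x ≤ 0) :
    ∀ i, RealRooted (F i) ∧ Interlaces (F i) (F (i + 1)) := by
  simp only [realRooted_iff_splits] at h0 h1 ⊢
  have hroots i : ∀ r ∈ (F i).roots, r ≤ 0 := fun r hr =>
    nonpos_of_mem_roots_of_coeff_nonneg (hnonneg i) hr
  have key : ∀ i, (F i).Splits ∧ (F (i + 1)).Splits ∧ Interlaces (F i) (F (i + 1)) := by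
    intro i
    induction i with
    | zero => exact ⟨h0, h1, h01⟩
    | succ i ih =>
      obtain ⟨hs, hs₁, hi⟩ := ih
      exact ⟨hs₁, splits_and_interlaces_of_eq_mul_add_mul (c := 1) hs₁ hs hi (hnonneg i _)
        (hnonneg (i + 2) _) (hrec i) (fun r hr => hB i r (hroots _ r hr))
        (fun r hr => (hroots _ r hr).trans_lt one_pos)
        (eval_nonneg_of_coeff_nonneg (hnonneg (i + 2)) zero_le_one)
        (by rcases hdeg (i + 1) with h | h <;> omega)⟩
  exact fun i => ⟨(key i).1, (key i).2.2⟩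
end
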